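/- Let δ > 0 and r ∈ (1, ∞), and let r' = r/(r−1). Define T on symmetric real 3×3 matrices by T(D) = ((|D| − δ)⁺/|D|) (1 + |D|²)^{(r−2)/2} D for D ≠ O and T(O) = O. Then there exist constants α > 0 and β > 0 (depending only on δ and r) such that T(D) : D ≥ α( |T(D)|^{r'} + |D|^{r} ) − β for every symmetric real 3×3 matrix D. Moreover, the same conclusion holds with exponent q = max{r, 2} in place of r (and q' = q/(q−1) in place of r') for the map T̃(D) = ((|D| − δ)⁺/|D|)(1 + |D|^{r−2}) D. -/

import Mathlib

/-!
Both maps have the form `T D = (f |D| / |D|) • D` with `f d = (d - δ)⁺ 𝒮(d)`, so that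
`|T D| = f |D|` and `T D : D = f |D| · |D|`; the matrix inequality is therefore the scalar
inequality `α (f(d)^{q'} + d^q) - β ≤ f(d) d`. For large `d` one has `f(d) ≍ d^{q-1}`, hence
`f(d)^{q'} ≲ d^q ≲ f(d) d` because `(q - 1) q' = q`. Below `δ` the activation makes `f`
vanish, which hides the singularity of `d^{r-2}` at `0`; on the compact range `δ ≤ d ≤ δ + 1`
everything is bounded and absorbed into `β`.
-/

/-- Frobenius norm of a real 3×3 matrix: `|A|² = tr(A²)` for symmetric `A`. -/
noncomputable def frobNorm (A : Matrix (Fin 3) (Fin 3) ℝ) : ℝ :=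
  Real.sqrt (∑ i, ∑ j, (A i j) ^ 2)

/-- Entrywise product `A : B = Σᵢⱼ Aᵢⱼ Bᵢⱼ`. -/
def mdot (A B : Matrix (Fin 3) (Fin 3) ℝ) : ℝ := ∑ i, ∑ j, A i j * B i j

open Real Set

section Matrix

variable (A B : Matrix (Fin 3) (Fin 3) ℝ)

lemma frobNorm_nonneg : 0 ≤ frobNorm A :=
  sqrt_nonneg _

lemma mdot_self : mdot A A = frobNorm A ^ 2 := by
  rw [frobNorm, sq_sqrt (by positivity)]
  simp only [mdot, sq]

lemma frobNorm_smul (c : ℝ) : frobNorm (c • A) = |c| * frobNorm A := by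
  have h : ∀ i j, (c • A) i j ^ 2 = c ^ 2 * A i j ^ 2 := fun i j => by
    rw [Matrix.smul_apply, smul_eq_mul, mul_pow]
  simp only [frobNorm, h, ← Finset.mul_sum]
  rw [sqrt_mul (sq_nonneg c), sqrt_sq_eq_abs]

lemma mdot_smul_left (c : ℝ) : mdot (c • A) B = c * mdot A B := by
  simp only [mdot, Matrix.smul_apply, smul_eq_mul, Finset.mul_sum, mul_assoc]

lemma frobNorm_div_frobNorm_smul {c : ℝ} (hc : 0 ≤ c) (h0 : frobNorm A = 0 → c = 0) :
    frobNorm ((c / frobNorm A) • A) = c := by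
  rw [frobNorm_smul, abs_of_nonneg (div_nonneg hc (frobNorm_nonneg A))]
  rcases eq_or_ne (frobNorm A) 0 with hA | hA
  · rw [hA, h0 hA, mul_zero]
  · exact div_mul_cancel₀ c hA

lemma mdot_div_frobNorm_smul (c : ℝ) : mdot ((c / frobNorm A) • A) A = c * frobNorm A := by
  rw [mdot_smul_left, mdot_self]
  rcases eq_or_ne (frobNorm A) 0 with hA | hA
  · simp [hA]
  · field_simp

end Matrix

lemma rpow_bounds_of_le_of_le_mul {x y c e : ℝ} (hx : 0 < x) (hxy : x ≤ y)
    (hyc : y ≤ c * x) :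
    min 1 (c ^ e) * x ^ e ≤ y ^ e ∧ y ^ e ≤ max 1 (c ^ e) * x ^ e := by
  have hc : 0 ≤ c := by nlinarith
  have hcx : (c * x) ^ e = c ^ e * x ^ e := mul_rpow hc hx.le
  have hxe : 0 ≤ x ^ e := rpow_nonneg hx.le e
  rcases le_total 0 e with he | he
  · have h₁ : x ^ e ≤ y ^ e := rpow_le_rpow hx.le hxy he
    have h₂ : y ^ e ≤ c ^ e * x ^ e := hcx ▸ rpow_le_rpow (hx.le.trans hxy) hyc he
    constructor
    · nlinarith [min_le_left 1 (c ^ e)]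
    · nlinarith [le_max_right 1 (c ^ e)]
  · have h₁ : y ^ e ≤ x ^ e := rpow_le_rpow_of_nonpos hx hxy he
    have h₂ : c ^ e * x ^ e ≤ y ^ e := hcx ▸ rpow_le_rpow_of_nonpos (hx.trans_le hxy) hyc he
    constructor
    · nlinarith [min_le_right 1 (c ^ e)]
    · nlinarith [le_max_left 1 (c ^ e)]

lemma one_add_sq_rpow_half_bounds {d : ℝ} (hd : 1 ≤ d) (p : ℝ) :
    min 1 (2 ^ (p / 2)) * d ^ p ≤ (1 + d ^ 2) ^ (p / 2) ∧
      (1 + d ^ 2) ^ (p / 2) ≤ max 1 (2 ^ (p / 2)) * d ^ p := by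
  have hsq : (d ^ 2) ^ (p / 2) = d ^ p := by
    rw [← rpow_natCast_mul (by linarith), Nat.cast_ofNat, mul_div_cancel₀ _ two_ne_zero]
  rw [← hsq]
  exact rpow_bounds_of_le_of_le_mul (by positivity) (by linarith) (by nlinarith)

lemma one_add_rpow_bounds {d : ℝ} (hd : 1 ≤ d) (r : ℝ) :
    d ^ (max r 2 - 2) ≤ 1 + d ^ (r - 2) ∧ 1 + d ^ (r - 2) ≤ 2 * d ^ (max r 2 - 2) := by
  rcases le_total 2 r with hr | hr
  · have h1 : 1 ≤ d ^ (r - 2) := one_le_rpow hd (by linarith)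
    rw [max_eq_left hr]
    constructor <;> linarith
  · have h1 : d ^ (r - 2) ≤ 1 := rpow_le_one_of_one_le_of_nonpos hd (by linarith)
    have h0 : 0 ≤ d ^ (r - 2) := rpow_nonneg (by linarith) _
    rw [max_eq_right hr, sub_self, rpow_zero]
    constructor <;> linarith

lemma exists_coercive_of_growth {q q' M K c₁ c₂ : ℝ} (hq : 1 < q) (hq' : q' = q / (q - 1))
    (hM : 1 ≤ M) (hc₁ : 0 < c₁) (hc₂ : 0 ≤ c₂) (f : ℝ → ℝ) (hf0 : ∀ d, 0 ≤ d → 0 ≤ f d)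
    (hbdd : ∀ d, 0 ≤ d → d ≤ M → f d ≤ K)
    (hlow : ∀ d, M ≤ d → c₁ * d ^ (q - 1) ≤ f d)
    (hup : ∀ d, M ≤ d → f d ≤ c₂ * d ^ (q - 1)) :
    ∃ α : ℝ, 0 < α ∧ ∃ β : ℝ, 0 < β ∧
      ∀ d, 0 ≤ d → α * (f d ^ q' + d ^ q) - β ≤ f d * d := by
  have hq'0 : 0 < q' := hq' ▸ div_pos (by linarith) (by linarith)
  have hK : 0 ≤ K := (hf0 0 le_rfl).trans (hbdd 0 le_rfl (by linarith))
  set α := c₁ / (1 + c₂ ^ q')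
  have hα : 0 < α := div_pos hc₁ (by positivity)
  have hβ : 0 < α * (K ^ q' + M ^ q) + 1 := by positivity
  refine ⟨α, hα, _, hβ, fun d hd => ?_⟩
  have hfd := mul_nonneg (hf0 d hd) hd
  rcases le_total d M with hdM | hMd
  · have hK' : f d ^ q' ≤ K ^ q' := rpow_le_rpow (hf0 d hd) (hbdd d hd hdM) hq'0.le
    have hM' : d ^ q ≤ M ^ q := rpow_le_rpow hd hdM (by linarith)
    nlinarith
  · have hd0 : 0 < d := by linarith
    have hdq : d ^ q = d ^ (q - 1) * d := by
      rw [← rpow_add_one hd0.ne', sub_add_cancel]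
    have hfq' : f d ^ q' ≤ c₂ ^ q' * d ^ q := calc
      f d ^ q' ≤ (c₂ * d ^ (q - 1)) ^ q' := rpow_le_rpow (hf0 d hd) (hup d hMd) hq'0.le
      _ = c₂ ^ q' * d ^ ((q - 1) * q') := by rw [mul_rpow hc₂ (by positivity), rpow_mul hd0.le]
      _ = c₂ ^ q' * d ^ q := by rw [hq', mul_div_cancel₀ _ (by linarith)]
    have hdq0 : 0 ≤ d ^ q := by positivity
    calc α * (f d ^ q' + d ^ q) - (α * (K ^ q' + M ^ q) + 1)
        ≤ α * ((1 + c₂ ^ q') * d ^ q) := by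
          have : 0 ≤ K ^ q' + M ^ q := by positivity
          nlinarith
      _ = c₁ * d ^ (q - 1) * d := by
          rw [hdq, ← mul_assoc, div_mul_cancel₀ c₁ (by positivity), mul_assoc]
      _ ≤ f d * d := mul_le_mul_of_nonneg_right (hlow d hMd) hd

lemma max_sub_zero_mul_nonneg {δ : ℝ} (hδ : 0 ≤ δ) {S : ℝ → ℝ} (hS0 : ∀ d, 0 < d → 0 ≤ S d)
    (d : ℝ) : 0 ≤ max (d - δ) 0 * S d := by
  rcases le_or_gt d δ with hd | hd
  · rw [max_eq_right (by linarith), zero_mul]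
  · exact mul_nonneg (le_max_right _ _) (hS0 d (by linarith))

lemma exists_coercive_activated {q q' δ a b : ℝ} (hq : 1 < q) (hq' : q' = q / (q - 1))
    (hδ : 0 < δ) (S : ℝ → ℝ) (hS0 : ∀ d, 0 < d → 0 ≤ S d)
    (hSbdd : BddAbove (S '' Icc δ (δ + 1))) (ha : 0 < a)
    (hlow : ∀ d, 1 ≤ d → a * d ^ (q - 2) ≤ S d) (hup : ∀ d, 1 ≤ d → S d ≤ b * d ^ (q - 2)) :
    ∃ α : ℝ, 0 < α ∧ ∃ β : ℝ, 0 < β ∧ ∀ d, 0 ≤ d →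
      α * ((max (d - δ) 0 * S d) ^ q' + d ^ q) - β ≤ max (d - δ) 0 * S d * d := by
  obtain ⟨K, hK⟩ := hSbdd
  have hSK : ∀ d ∈ Icc δ (δ + 1), S d ≤ K := fun d hd => hK (mem_image_of_mem S hd)
  have hb : 0 ≤ b := by simpa using (hS0 1 one_pos).trans (hup 1 le_rfl)
  have hpow : ∀ d : ℝ, 0 < d → d * d ^ (q - 2) = d ^ (q - 1) := fun d hd => by
    rw [mul_comm, ← rpow_add_one hd.ne']
    ring_nf
  refine exists_coercive_of_growth (M := δ + 1) (K := K) (c₁ := a / (δ + 1)) hq hq' (by linarith)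
    (by positivity) hb _ (fun d _ => max_sub_zero_mul_nonneg hδ.le hS0 d) ?_ ?_ ?_
  · intro d hd hdM
    rcases le_total d δ with hdδ | hδd
    · rw [max_eq_right (by linarith), zero_mul]
      exact (hS0 δ hδ).trans (hSK δ ⟨le_rfl, by linarith⟩)
    · have hSd := hSK d ⟨hδd, hdM⟩
      have hS := hS0 d (by linarith)
      rw [max_eq_left (by linarith)]
      nlinarith
  · intro d hdM
    have hd : 0 < d := by linarith
    have hdδ : d / (δ + 1) ≤ d - δ := by
      rw [div_le_iff₀ (by linarith)]
      nlinarith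
    rw [max_eq_left (by linarith), ← hpow d hd]
    calc a / (δ + 1) * (d * d ^ (q - 2)) = d / (δ + 1) * (a * d ^ (q - 2)) := by ring
      _ ≤ (d - δ) * S d :=
        mul_le_mul hdδ (hlow d (by linarith)) (by positivity) (by linarith)
  · intro d hdM
    have hd : 0 < d := by linarith
    rw [← hpow d hd]
    calc max (d - δ) 0 * S d ≤ d * (b * d ^ (q - 2)) :=
          mul_le_mul (max_le (by linarith) hd.le) (hup d (by linarith))
            (hS0 d hd) hd.le
      _ = b * (d * d ^ (q - 2)) := by ring

lemma exists_coercive_matrix {q q' δ : ℝ} (hδ : 0 ≤ δ) (S : ℝ → ℝ)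
    (hS0 : ∀ d, 0 < d → 0 ≤ S d) (T : Matrix (Fin 3) (Fin 3) ℝ → Matrix (Fin 3) (Fin 3) ℝ)
    (hT : ∀ D, T D = ((max (frobNorm D - δ) 0 / frobNorm D) * S (frobNorm D)) • D)
    (hscalar : ∃ α : ℝ, 0 < α ∧ ∃ β : ℝ, 0 < β ∧ ∀ d, 0 ≤ d →
      α * ((max (d - δ) 0 * S d) ^ q' + d ^ q) - β ≤ max (d - δ) 0 * S d * d) :
    ∃ α : ℝ, 0 < α ∧ ∃ β : ℝ, 0 < β ∧
      ∀ D : Matrix (Fin 3) (Fin 3) ℝ, D.IsSymm →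
        α * (frobNorm (T D) ^ q' + frobNorm D ^ q) - β ≤ mdot (T D) D := by
  obtain ⟨α, hα, β, hβ, h⟩ := hscalar
  refine ⟨α, hα, β, hβ, fun D _ => ?_⟩
  have hTD : T D = ((max (frobNorm D - δ) 0 * S (frobNorm D)) / frobNorm D) • D := by
    rw [hT, div_mul_eq_mul_div]
  have h0 : frobNorm D = 0 → max (frobNorm D - δ) 0 * S (frobNorm D) = 0 := fun hD => by
    rw [hD, max_eq_right (by linarith), zero_mul]
  rw [hTD, mdot_div_frobNorm_smul,
    frobNorm_div_frobNorm_smul D (max_sub_zero_mul_nonneg hδ hS0 _) h0]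
  exact h _ (frobNorm_nonneg D)

/-- Coercivity of the activated constitutive functions: the graph of `T`
(with factor `𝒮(d) = (1+d²)^{(r−2)/2}`) is an `r`-graph, and the graph of `T̃`
(with factor `𝒮(d) = 1 + d^{r−2}`) is a `q`-graph with `q = max{r, 2}`. -/
theorem statement16 (r r' δ : ℝ) (hr : 1 < r) (hr' : r' = r / (r - 1)) (hδ : 0 < δ)
    (T Tt : Matrix (Fin 3) (Fin 3) ℝ → Matrix (Fin 3) (Fin 3) ℝ)
    (hT : ∀ D, T D = ((max (frobNorm D - δ) 0 / frobNorm D)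
      * (1 + frobNorm D ^ 2) ^ ((r - 2) / 2)) • D)
    (hTt : ∀ D, Tt D = ((max (frobNorm D - δ) 0 / frobNorm D)
      * (1 + frobNorm D ^ (r - 2))) • D)
    (q q' : ℝ) (hq : q = max r 2) (hq' : q' = q / (q - 1)) :
    (∃ α : ℝ, 0 < α ∧ ∃ β : ℝ, 0 < β ∧
      ∀ D : Matrix (Fin 3) (Fin 3) ℝ, D.IsSymm →
        α * (frobNorm (T D) ^ r' + frobNorm D ^ r) - β ≤ mdot (T D) D) ∧
    (∃ α : ℝ, 0 < α ∧ ∃ β : ℝ, 0 < β ∧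
      ∀ D : Matrix (Fin 3) (Fin 3) ℝ, D.IsSymm →
        α * (frobNorm (Tt D) ^ q' + frobNorm D ^ q) - β ≤ mdot (Tt D) D) := by
  subst hq
  have hS₀ : ∀ d : ℝ, 0 < d → 0 ≤ (1 + d ^ 2) ^ ((r - 2) / 2) :=
    fun d _ => rpow_nonneg (by positivity) _
  have hS₀t : ∀ d : ℝ, 0 < d → 0 ≤ 1 + d ^ (r - 2) :=
    fun d hd => add_nonneg zero_le_one (rpow_nonneg hd.le _)
  have hbdd : BddAbove ((fun d : ℝ => (1 + d ^ 2) ^ ((r - 2) / 2)) '' Icc δ (δ + 1)) :=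
    isCompact_Icc.bddAbove_image
      (Continuous.rpow_const (by fun_prop) fun d => Or.inl (by positivity)).continuousOn
  have hbddt : BddAbove ((fun d : ℝ => 1 + d ^ (r - 2)) '' Icc δ (δ + 1)) :=
    isCompact_Icc.bddAbove_image <| continuousOn_const.add <|
      continuousOn_id.rpow_const fun d hd => Or.inl (hδ.trans_le hd.1).ne'
  have h2 : (0 : ℝ) < 2 ^ ((r - 2) / 2) := by positivity
  exact ⟨exists_coercive_matrix hδ.le _ hS₀ T hT <|
      exists_coercive_activated hr hr' hδ _ hS₀ hbdd (lt_min one_pos h2)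
        (fun d hd => (one_add_sq_rpow_half_bounds hd _).1)
        (fun d hd => (one_add_sq_rpow_half_bounds hd _).2),
    exists_coercive_matrix hδ.le _ hS₀t Tt hTt <|
      exists_coercive_activated (lt_max_of_lt_left hr) hq' hδ _ hS₀t hbddt one_pos
        (fun d hd => by simpa using (one_add_rpow_bounds hd r).1)
        (fun d hd => (one_add_rpow_bounds hd r).2)⟩
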